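/- For every k ≥ 0 (with i ∈ {1,…,k} when k ≥ 1), the genus-0 refined floor diagram counts for degree-one classes in X_k' are: N_q^{(2),∅}(X_k',[L],0) = [2]_q/2; N_q^{(1,1),∅}(X_k',[L],0) = 1; N_q^{(1),(1)}(X_k',[L],0) = 1; N_q^{∅,(1,1)}(X_k',[L],0) = 1; N_q^{∅,(2)}(X_k',[L],0) = [2]_q; N_q^{(1),∅}(X_k',[L]−[E_i],0) = 1; N_q^{∅,(1)}(X_k',[L]−[E_i],0) = 1. (Here [L] corresponds to a = 1, all bⱼ = 0, d·[E] = 2, and [L]−[E_i] to a = 1, b_i = 1, bⱼ = 0 for j ≠ i, d·[E] = 1.) -/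

import Mathlib

open LaurentPolynomial

open scoped Classical

noncomputable section FloorDiagrams

/-- The quantum integer `[n]_q = q^{−(n−1)/2} + q^{−(n−3)/2} + ⋯ + q^{(n−1)/2}`,
as a Laurent polynomial in the variable `t = q^{1/2}` (here `T m` denotes `t^m`). -/
def qInt (n : ℕ) : LaurentPolynomial ℚ :=
  ∑ j ∈ Finset.range n, T (2 * (j : ℤ) - ((n : ℤ) - 1))

/-- A finite weighted oriented (multi)graph: `nV` vertices, `nE` edges, each edge `e`
having a source `src e`, a target `tgt e` and a positive integer weight `w e`. -/
structure WOGraph where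
  nV : ℕ
  nE : ℕ
  src : Fin nE → Fin nV
  tgt : Fin nE → Fin nV
  w : Fin nE → ℕ
  w_pos : ∀ e, 0 < w e

namespace WOGraph

variable (G : WOGraph)

/-- The edge `e` is adjacent to the vertex `v`. -/
def Adj (e : Fin G.nE) (v : Fin G.nV) : Prop :=
  G.src e = v ∨ G.tgt e = v

/-- One step of the (unoriented) adjacency relation between vertices. -/
def connStep (u v : Fin G.nV) : Prop :=
  ∃ e, (G.src e = u ∧ G.tgt e = v) ∨ (G.src e = v ∧ G.tgt e = u)

/-- The graph is connected. -/
def Connected : Prop :=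
  0 < G.nV ∧ ∀ u v, Relation.ReflTransGen G.connStep u v

/-- One step of the oriented relation between vertices. -/
def dirStep (u v : Fin G.nV) : Prop :=
  ∃ e, G.src e = u ∧ G.tgt e = v

/-- The oriented graph is acyclic: there is no non-trivial oriented cycle. -/
def Acyclic : Prop :=
  ∀ v, ¬ Relation.TransGen G.dirStep v v

/-- The number of edges adjacent to a vertex (with multiplicity). -/
def degree (v : Fin G.nV) : ℕ :=
  (Finset.univ.filter fun e => G.src e = v).card +
    (Finset.univ.filter fun e => G.tgt e = v).card

/-- A leaf is a vertex adjacent to exactly one edge. -/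
def IsLeaf (v : Fin G.nV) : Prop := G.degree v = 1

/-- `Vert^∞(G)`: leaves all of whose adjacent edges are outgoing. -/
def InfVert (v : Fin G.nV) : Prop :=
  G.IsLeaf v ∧ ∀ e, G.Adj e v → G.src e = v

/-- `Edge^∞(G)`: edges adjacent to a vertex of `Vert^∞(G)`. -/
def InfEdge (e : Fin G.nE) : Prop :=
  ∃ v, G.Adj e v ∧ G.InfVert v

/-- The divergence of a vertex: sum of weights of incoming edges minus sum of weights of
outgoing edges. -/
def div (v : Fin G.nV) : ℤ :=
  (∑ e ∈ Finset.univ.filter (fun e => G.tgt e = v), (G.w e : ℤ)) -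
    (∑ e ∈ Finset.univ.filter (fun e => G.src e = v), (G.w e : ℤ))

/-- A sink is a vertex all of whose adjacent edges are oriented toward it. -/
def IsSink (v : Fin G.nV) : Prop :=
  ∀ e, G.Adj e v → G.tgt e = v

/-- One step of the partial order on `Vert ⊔ Edge` induced by the orientation:
a vertex is below each of its outgoing edges, and each edge is below its target. -/
def veStep : (Fin G.nV ⊕ Fin G.nE) → (Fin G.nV ⊕ Fin G.nE) → Prop
  | Sum.inl u, Sum.inr e => G.src e = u
  | Sum.inr e, Sum.inl v => G.tgt e = v
  | _, _ => False

end WOGraph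

/-- `G` is a floor diagram (relative to a conic) of genus `g` and degree `a`. -/
structure IsFloorDiagram (G : WOGraph) (g a : ℕ) : Prop where
  conn : G.Connected
  acyclic : G.Acyclic
  betti : G.nE + 1 = G.nV + g
  div_floor : ∀ v, ¬ G.InfVert v → G.div v = 2 ∨ G.div v = 4
  div_inf : ∀ v, G.InfVert v → G.div v ≤ -1
  sink_of_two : ∀ v, ¬ G.InfVert v → G.div v = 2 → G.IsSink v
  total_div : (∑ v ∈ Finset.univ.filter (fun v => G.InfVert v), G.div v) = -(2 * (a : ℤ))

/-- The marking domain `A₀ ⊔ A₁ ⊔ ⋯ ⊔ A_k`, where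
`A₀ = {1, …, a − 1 + g + l(μ₁) + l(μ₂)}` and `|Aᵢ| = bᵢ`. -/
def MarkDom (k g a : ℕ) (b : Fin k → ℕ) (l1 l2 : ℕ) : Type :=
  Fin (a + g + l1 + l2 - 1) ⊕ (Σ i : Fin k, Fin (b i))

/-- `m` is a `d`-marking of type `(μ₁, μ₂)` of the floor diagram `G` of genus `g` and
degree `a`, where `d` is encoded by `a = d·[L]` and `bᵢ = d·[Eᵢ]`. -/
structure IsMarking (k g a : ℕ) (b : Fin k → ℕ) (μ₁ μ₂ : List ℕ) (G : WOGraph)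
    (m : MarkDom k g a b μ₁.length μ₂.length → Fin G.nV ⊕ Fin G.nE) : Prop where
  inj : Function.Injective m
  /-- `m` is increasing: on `A₀` (with its natural order) it is compatible with the strict
  partial order on `Vert ⊔ Edge` induced by the orientation; the elements of
  `A₁, …, A_k` are incomparable, hence impose no condition. -/
  incr : ∀ i j : Fin (a + g + μ₁.length + μ₂.length - 1),
    Relation.TransGen G.veStep (m (Sum.inl i)) (m (Sum.inl j)) → i < j
  /-- No floor of degree `1` is in the image of `m`. -/
  no_floor_one : ∀ v, ¬ G.InfVert v → G.div v = 2 → ∀ p, m p ≠ Sum.inl v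
  /-- For `v ∈ Vert^∞` with adjacent edge `e`, exactly one of `v`, `e` is in the image. -/
  inf_pair : ∀ v, G.InfVert v → ∀ e, G.Adj e v →
    Xor' (∃ p, m p = Sum.inl v) (∃ p, m p = Sum.inr e)
  /-- `m(A₁ ∪ ⋯ ∪ A_k) ⊆ Vert^∞`. -/
  exc_vert : ∀ (i : Fin k) (p : Fin (b i)),
    ∃ v, G.InfVert v ∧ m (Sum.inr ⟨i, p⟩) = Sum.inl v
  /-- `m({1, …, l(μ₁)}) = m(A₀) ∩ Vert^∞`. -/
  mu1_vert : ∀ i : Fin (a + g + μ₁.length + μ₂.length - 1),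
    (∃ v, G.InfVert v ∧ m (Sum.inl i) = Sum.inl v) ↔ (i : ℕ) < μ₁.length
  /-- Every floor is adjacent to at most one edge adjacent to a vertex of `m(Aᵢ)`. -/
  floor_once : ∀ (i : Fin k) (v : Fin G.nV), ¬ G.InfVert v →
    ∀ e e' : Fin G.nE, G.Adj e v → G.Adj e' v →
      (∃ (p : Fin (b i)) (u : Fin G.nV), m (Sum.inr ⟨i, p⟩) = Sum.inl u ∧ G.Adj e u) →
      (∃ (p : Fin (b i)) (u : Fin G.nV), m (Sum.inr ⟨i, p⟩) = Sum.inl u ∧ G.Adj e' u) →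
      e = e'
  /-- For `i ∈ {1, …, l(μ₁)}`, the edge adjacent to `m(i)` has weight `μ₁^{(i)}`. -/
  mu1_weight : ∀ (i : Fin (a + g + μ₁.length + μ₂.length - 1)) (h : (i : ℕ) < μ₁.length)
    (v : Fin G.nV) (e : Fin G.nE),
      m (Sum.inl i) = Sum.inl v → G.Adj e v → G.w e = μ₁.get ⟨(i : ℕ), h⟩
  /-- Exactly `l(μ₂)` edges of `Edge^∞` are in the image of `m|_{A₀}`, and their weights
  are the entries of `μ₂`. -/
  mu2_edges :
    ((Finset.univ.filter fun e : Fin G.nE =>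
        G.InfEdge e ∧ ∃ i : Fin (a + g + μ₁.length + μ₂.length - 1),
          m (Sum.inl i) = Sum.inr e).val.map G.w) = (μ₂ : Multiset ℕ)

/-- A `d`-marked floor diagram of genus `g` and type `(μ₁, μ₂)`, where the class `d` is
encoded by `a = d·[L]` and `bᵢ = d·[Eᵢ]`. -/
structure MarkedFD (k g a : ℕ) (b : Fin k → ℕ) (μ₁ μ₂ : List ℕ) where
  G : WOGraph
  m : MarkDom k g a b μ₁.length μ₂.length → Fin G.nV ⊕ Fin G.nE
  fd : IsFloorDiagram G g a
  marking : IsMarking k g a b μ₁ μ₂ G m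

namespace MarkedFD

variable {k g a : ℕ} {b : Fin k → ℕ} {μ₁ μ₂ : List ℕ}

/-- Equivalence of marked floor diagrams: an isomorphism of weighted oriented graphs
together with a bijection of the marking sets which is the identity on `A₀` and maps
each `Aᵢ` (`i ≥ 1`) bijectively onto itself, compatible with the markings. -/
def Equivalent (X Y : MarkedFD k g a b μ₁ μ₂) : Prop :=
  ∃ (φV : Fin X.G.nV ≃ Fin Y.G.nV) (φE : Fin X.G.nE ≃ Fin Y.G.nE)
    (ψ : MarkDom k g a b μ₁.length μ₂.length ≃ MarkDom k g a b μ₁.length μ₂.length),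
      (∀ e, Y.G.src (φE e) = φV (X.G.src e)) ∧
      (∀ e, Y.G.tgt (φE e) = φV (X.G.tgt e)) ∧
      (∀ e, Y.G.w (φE e) = X.G.w e) ∧
      (∀ i, ψ (Sum.inl i) = Sum.inl i) ∧
      (∀ (i : Fin k) (p : Fin (b i)), ∃ p' : Fin (b i),
        ψ (Sum.inr ⟨i, p⟩) = Sum.inr ⟨i, p'⟩) ∧
      (∀ p, Y.m (ψ p) = Sum.map φV φE (X.m p))

variable (X : MarkedFD k g a b μ₁ μ₂)

/-- `Edge^{μ₁}`: edges adjacent to `m({1, …, l(μ₁)})`. -/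
def EdgeMu1 : Finset (Fin X.G.nE) :=
  Finset.univ.filter fun e =>
    ∃ i : Fin (a + g + μ₁.length + μ₂.length - 1), (i : ℕ) < μ₁.length ∧
      ∃ v, X.m (Sum.inl i) = Sum.inl v ∧ X.G.Adj e v

/-- `Edge^{μ₂}`: the `l(μ₂)` edges of `Edge^∞` in the image of `m|_{A₀}`. -/
def EdgeMu2 : Finset (Fin X.G.nE) :=
  Finset.univ.filter fun e =>
    X.G.InfEdge e ∧ ∃ i : Fin (a + g + μ₁.length + μ₂.length - 1),
      X.m (Sum.inl i) = Sum.inr e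

/-- `Edge°`: edges not in `Edge^∞`. -/
def EdgeO : Finset (Fin X.G.nE) :=
  Finset.univ.filter fun e => ¬ X.G.InfEdge e

/-- The q-refined (Block–Göttsche) multiplicity of a marked floor diagram:
`∏_{e∈Edge^{μ₂}} [w(e)]_q/w(e) · ∏_{e∈Edge^{μ₁}} [w(e)]_q/w(e) · ∏_{e∈Edge^{μ₂}} w(e)
 · ∏_{e∈Edge°} [w(e)]_q²`. -/
def multq : LaurentPolynomial ℚ :=
  (∏ e ∈ X.EdgeMu2, (C ((X.G.w e : ℚ)⁻¹) * qInt (X.G.w e))) *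
    (∏ e ∈ X.EdgeMu1, (C ((X.G.w e : ℚ)⁻¹) * qInt (X.G.w e))) *
    (∏ e ∈ X.EdgeMu2, C ((X.G.w e : ℚ))) *
    (∏ e ∈ X.EdgeO, (qInt (X.G.w e)) ^ 2)

/-- The complex multiplicity of a marked floor diagram:
`∏_i μ₂^{(i)} · ∏_{e∈Edge°} w(e)²`. -/
def multC : ℚ :=
  (μ₂.map fun x => (x : ℚ)).prod * ∏ e ∈ X.EdgeO, (X.G.w e : ℚ) ^ 2

end MarkedFD

/-- `N` is the refined count `N_q^{μ₁,μ₂}(X_k', d, g)` of `d`-marked floor diagrams of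
genus `g` and type `(μ₁, μ₂)`: the sum of the q-refined multiplicities over a (finite) set
of representatives of the equivalence classes of marked floor diagrams. -/
def IsRefinedCount (k g a : ℕ) (b : Fin k → ℕ) (μ₁ μ₂ : List ℕ)
    (N : LaurentPolynomial ℚ) : Prop :=
  ∃ (ι : Type) (hι : Fintype ι) (rep : ι → MarkedFD k g a b μ₁ μ₂),
    (∀ X : MarkedFD k g a b μ₁ μ₂, ∃! i : ι, X.Equivalent (rep i)) ∧
    N = ∑ i ∈ @Finset.univ ι hι, (rep i).multq

/-- `N` is the complex count `N_ℂ^{μ₁,μ₂}(X_k', d, g)` of `d`-marked floor diagrams of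
genus `g` and type `(μ₁, μ₂)`. -/
def IsComplexCount (k g a : ℕ) (b : Fin k → ℕ) (μ₁ μ₂ : List ℕ) (N : ℚ) : Prop :=
  ∃ (ι : Type) (hι : Fintype ι) (rep : ι → MarkedFD k g a b μ₁ μ₂),
    (∀ X : MarkedFD k g a b μ₁ μ₂, ∃! i : ι, X.Equivalent (rep i)) ∧
    N = ∑ i ∈ @Finset.univ ι hι, (rep i).multC

end FloorDiagrams

/-!
A floor diagram of degree one has a single floor, of divergence `2`, and each of its other
vertices is a leaf whose only edge points to that floor: it is a star whose legs have total
weight `2`. A marking puts exactly one marked point on each leg, on the leaf or on the edge, and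
the type `(μ₁, μ₂)` dictates which. Hence two marked floor diagrams of the same type differ only
by a relabelling of their legs, and each count has a single term: the star with
`l(μ₁) + l(μ₂) + Σᵢ bᵢ` legs of a common weight `c`, of multiplicity
`([c]_q / c) ^ l(μ₁) · [c]_q ^ l(μ₂)`.
-/

theorem Fintype.mul_card_eq_two_of_sum_eq_two {ι : Type*} [Fintype ι] {w : ι → ℕ}
    (hw : ∀ i, 0 < w i) (hsum : ∑ i, w i = 2) (i : ι) : w i * Fintype.card ι = 2 := by
  have hconst : ∀ j, w j = w i := fun j => by
    by_cases hji : j = i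
    · rw [hji]
    have hpair : w j + w i ≤ 2 := by
      rw [← hsum, ← Finset.sum_pair hji]
      exact Finset.sum_le_sum_of_subset (Finset.subset_univ _)
    have := hw i; have := hw j
    omega
  rw [← hsum, Finset.sum_congr rfl fun j _ => hconst j, Finset.sum_const, smul_eq_mul,
    Finset.card_univ, mul_comm]

theorem Fin.card_filter_le_val (n m : ℕ) :
    (Finset.univ.filter fun i : Fin n => m ≤ (i : ℕ)).card = n - m := by
  have := Finset.card_filter_add_card_filter_not (s := Finset.univ) (fun i : Fin n => (i : ℕ) < m)
  simp only [not_lt, Fin.card_filter_val_lt, Finset.card_univ, Fintype.card_fin] at this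
  omega

namespace WOGraph

variable {G : WOGraph}

theorem sum_div_eq_zero (G : WOGraph) : ∑ v, G.div v = 0 := by
  simp only [div, Finset.sum_sub_distrib,
    Finset.sum_fiberwise Finset.univ G.tgt (fun e => (G.w e : ℤ)),
    Finset.sum_fiberwise Finset.univ G.src (fun e => (G.w e : ℤ)), sub_self]

theorem InfVert.tgt_ne {v : Fin G.nV} (hv : G.InfVert v) (e : Fin G.nE) : G.tgt e ≠ v := by
  intro he
  have hsrc : G.src e = v := hv.2 e (Or.inr he)
  have hleaf : G.degree v = 1 := hv.1
  have h1 : 0 < (Finset.univ.filter fun e' => G.src e' = v).card :=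
    Finset.card_pos.mpr ⟨e, by simp [hsrc]⟩
  have h2 : 0 < (Finset.univ.filter fun e' => G.tgt e' = v).card :=
    Finset.card_pos.mpr ⟨e, by simp [he]⟩
  unfold degree at hleaf
  omega

theorem InfVert.existsUnique_src {v : Fin G.nV} (hv : G.InfVert v) : ∃! e, G.src e = v := by
  have hin : (Finset.univ.filter fun e => G.tgt e = v) = ∅ :=
    Finset.filter_eq_empty_iff.mpr fun e _ => hv.tgt_ne e
  have hleaf : G.degree v = 1 := hv.1
  rw [degree, hin, Finset.card_empty, add_zero, Finset.card_eq_one] at hleaf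
  obtain ⟨e, he⟩ := hleaf
  refine ⟨e, by simpa using Finset.ext_iff.mp he e, fun e' he' => ?_⟩
  simpa using (Finset.ext_iff.mp he e').mp (by simpa using he')

theorem veStep_iff {x y : Fin G.nV ⊕ Fin G.nE} : G.veStep x y ↔
    (∃ e, x = .inl (G.src e) ∧ y = .inr e) ∨ (∃ e, x = .inr e ∧ y = .inl (G.tgt e)) := by
  rcases x with u | e <;> rcases y with v | e' <;> simp [veStep, eq_comm]

structure IsStar (G : WOGraph) (v₀ : Fin G.nV) : Prop where
  tgt_eq : ∀ e, G.tgt e = v₀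
  src_injective : Function.Injective G.src
  exists_src_iff : ∀ v, (∃ e, G.src e = v) ↔ v ≠ v₀

namespace IsStar

variable {v₀ : Fin G.nV}

theorem src_ne (h : G.IsStar v₀) (e : Fin G.nE) : G.src e ≠ v₀ :=
  (h.exists_src_iff _).mp ⟨e, rfl⟩

theorem adj_src_iff (h : G.IsStar v₀) {e e' : Fin G.nE} : G.Adj e (G.src e') ↔ e = e' := by
  refine ⟨fun hadj => hadj.elim (fun hs => h.src_injective hs) fun ht => ?_,
    fun he => Or.inl (he ▸ rfl)⟩
  exact absurd (ht.symm.trans (h.tgt_eq e)) (h.src_ne e')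

theorem infVert_iff (h : G.IsStar v₀) (v : Fin G.nV) : G.InfVert v ↔ v ≠ v₀ := by
  refine ⟨fun hv => (h.exists_src_iff v).mp hv.existsUnique_src.exists, fun hv => ?_⟩
  obtain ⟨e, rfl⟩ := (h.exists_src_iff v).mpr hv
  have hout : (Finset.univ.filter fun e' => G.src e' = G.src e) = {e} := by
    ext e'
    simp [h.src_injective.eq_iff]
  have hin : (Finset.univ.filter fun e' => G.tgt e' = G.src e) = ∅ :=
    Finset.filter_eq_empty_iff.mpr fun e' _ => by rw [h.tgt_eq]; exact (h.src_ne e).symm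
  refine ⟨by simp [IsLeaf, degree, hout, hin], fun e' he' => ?_⟩
  rw [(h.adj_src_iff).mp he']

theorem div_src (h : G.IsStar v₀) (e : Fin G.nE) : G.div (G.src e) = -(G.w e : ℤ) := by
  have hout : (Finset.univ.filter fun e' => G.src e' = G.src e) = {e} := by
    ext e'
    simp [h.src_injective.eq_iff]
  have hin : (Finset.univ.filter fun e' => G.tgt e' = G.src e) = ∅ :=
    Finset.filter_eq_empty_iff.mpr fun e' _ => by rw [h.tgt_eq]; exact (h.src_ne e).symm
  simp [div, hout, hin]

theorem div_center (h : G.IsStar v₀) : G.div v₀ = ∑ e, (G.w e : ℤ) := by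
  have hout : (Finset.univ.filter fun e => G.src e = v₀) = ∅ :=
    Finset.filter_eq_empty_iff.mpr fun e _ => h.src_ne e
  simp [div, hout, h.tgt_eq]

theorem isSink (h : G.IsStar v₀) : G.IsSink v₀ := fun e _ => h.tgt_eq e

theorem acyclic (h : G.IsStar v₀) : G.Acyclic := by
  intro v hv
  obtain ⟨_, ⟨e, hsrc, -⟩, -⟩ := Relation.TransGen.head'_iff.mp hv
  obtain ⟨_, -, ⟨e', -, htgt⟩⟩ := Relation.TransGen.tail'_iff.mp hv
  exact h.src_ne e (hsrc.trans (htgt.symm.trans (h.tgt_eq e')))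

theorem connected (h : G.IsStar v₀) : G.Connected := by
  have toCenter : ∀ v, Relation.ReflTransGen G.connStep v v₀ ∧
      Relation.ReflTransGen G.connStep v₀ v := by
    intro v
    by_cases hv : v = v₀
    · subst hv; exact ⟨.refl, .refl⟩
    obtain ⟨e, rfl⟩ := (h.exists_src_iff v).mpr hv
    exact ⟨.single ⟨e, Or.inl ⟨rfl, h.tgt_eq e⟩⟩, .single ⟨e, Or.inr ⟨rfl, h.tgt_eq e⟩⟩⟩
  exact ⟨Fin.pos v₀, fun u v => (toCenter u).1.trans (toCenter v).2⟩

noncomputable def vertexEquiv (h : G.IsStar v₀) : Option (Fin G.nE) ≃ Fin G.nV :=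
  Equiv.ofBijective (fun o => o.elim v₀ G.src) <| by
    refine ⟨fun o o' hoo' => ?_, fun v => ?_⟩
    · rcases o with _ | e <;> rcases o' with _ | e' <;> simp only [Option.elim] at hoo'
      · rfl
      · exact absurd hoo'.symm (h.src_ne e')
      · exact absurd hoo' (h.src_ne e)
      · rw [h.src_injective hoo']
    · by_cases hv : v = v₀
      · exact ⟨none, hv.symm⟩
      · obtain ⟨e, rfl⟩ := (h.exists_src_iff v).mpr hv
        exact ⟨some e, rfl⟩

@[simp] theorem vertexEquiv_none (h : G.IsStar v₀) : h.vertexEquiv none = v₀ := rfl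

@[simp] theorem vertexEquiv_some (h : G.IsStar v₀) (e : Fin G.nE) :
    h.vertexEquiv (some e) = G.src e := rfl

theorem vertexEquiv_symm_center (h : G.IsStar v₀) : h.vertexEquiv.symm v₀ = none :=
  h.vertexEquiv.symm_apply_eq.mpr rfl

theorem vertexEquiv_symm_src (h : G.IsStar v₀) (e : Fin G.nE) :
    h.vertexEquiv.symm (G.src e) = some e :=
  h.vertexEquiv.symm_apply_eq.mpr rfl

theorem nE_add_one (h : G.IsStar v₀) : G.nE + 1 = G.nV := by
  simpa using Fintype.card_congr h.vertexEquiv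

theorem transGen_veStep (h : G.IsStar v₀) {x y : Fin G.nV ⊕ Fin G.nE}
    (hxy : Relation.TransGen G.veStep x y) :
    y = .inl v₀ ∨ ∃ e, x = .inl (G.src e) ∧ y = .inr e := by
  induction hxy with
  | single hs =>
    rcases veStep_iff.mp hs with ⟨e, rfl, rfl⟩ | ⟨e, rfl, rfl⟩
    · exact .inr ⟨e, rfl, rfl⟩
    · exact .inl (by rw [h.tgt_eq])
  | tail _ hs ih =>
    rcases veStep_iff.mp hs with ⟨e, rfl, rfl⟩ | ⟨e, rfl, rfl⟩
    · rcases ih with hsrc | ⟨_, -, hinr⟩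
      · exact absurd (Sum.inl.inj hsrc) (h.src_ne e)
      · exact absurd hinr Sum.inl_ne_inr
    · exact .inl (by rw [h.tgt_eq])

theorem infEdge (h : G.IsStar v₀) (e : Fin G.nE) : G.InfEdge e :=
  ⟨G.src e, Or.inl rfl, (h.infVert_iff _).mpr (h.src_ne e)⟩

theorem w_mul_nE (h : G.IsStar v₀)
    (hdiv : G.div v₀ = 2) (e : Fin G.nE) : G.w e * G.nE = 2 := by
  have hsum : ∑ e, G.w e = 2 := by
    have := h.div_center
    rw [hdiv] at this
    exact_mod_cast this.symm
  simpa using Fintype.mul_card_eq_two_of_sum_eq_two G.w_pos hsum e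

theorem isFloorDiagram {a : ℕ} (h : G.IsStar v₀) (hw : ∑ e, (G.w e : ℤ) = 2 * a)
    (ha : a = 1 ∨ a = 2) : IsFloorDiagram G 0 a := by
  have hfloor : ∀ v, ¬ G.InfVert v → v = v₀ := fun v hv => by
    simpa [h.infVert_iff] using hv
  refine ⟨h.connected, h.acyclic, h.nE_add_one, fun v hv => ?_, fun v hv => ?_,
    fun v hv _ => hfloor v hv ▸ h.isSink, ?_⟩
  · rw [hfloor v hv, h.div_center, hw]
    omega
  · obtain ⟨e, rfl⟩ := (h.exists_src_iff v).mpr ((h.infVert_iff v).mp hv)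
    rw [h.div_src]
    have := G.w_pos e
    omega
  · have hsplit := Finset.sum_filter_add_sum_filter_not Finset.univ (fun v => G.InfVert v) G.div
    have hcenter : (Finset.univ.filter fun v => ¬ G.InfVert v) = {v₀} := by
      ext v
      simp [h.infVert_iff]
    rw [hcenter, Finset.sum_singleton, G.sum_div_eq_zero, h.div_center, hw] at hsplit
    linarith

end IsStar

def star {n : ℕ} (w : Fin n → ℕ) (hw : ∀ j, 0 < w j) : WOGraph where
  nV := n + 1
  nE := n
  src := Fin.castSucc
  tgt := fun _ => Fin.last n
  w := w
  w_pos := hw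

theorem isStar_star {n : ℕ} (w : Fin n → ℕ) (hw : ∀ j, 0 < w j) :
    (star w hw).IsStar (Fin.last n) :=
  ⟨fun _ => rfl, Fin.castSucc_injective n, fun _ => Fin.exists_castSucc_eq⟩

end WOGraph

theorem IsFloorDiagram.exists_isStar {G : WOGraph} {g : ℕ} (hG : IsFloorDiagram G g 1) :
    ∃ v₀, G.IsStar v₀ ∧ G.div v₀ = 2 := by
  set floors := Finset.univ.filter fun v => ¬ G.InfVert v
  have hsum : ∑ v ∈ floors, G.div v = 2 := by
    have hsplit := Finset.sum_filter_add_sum_filter_not Finset.univ (fun v => G.InfVert v) G.div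
    rw [G.sum_div_eq_zero, hG.total_div] at hsplit
    push_cast at hsplit
    linarith
  have hge : ∀ v ∈ floors, 2 ≤ G.div v := fun v hv => by
    rcases hG.div_floor v (Finset.mem_filter.mp hv).2 with h2 | h4 <;> omega
  -- each floor contributes at least `2` to a total of `2`, so there is exactly one
  obtain ⟨v₀, hv₀⟩ : ∃ v₀, floors = {v₀} := by
    have hcard : floors.card * 2 ≤ 2 := by
      simpa [hsum] using Finset.card_nsmul_le_sum floors G.div 2 hge
    have hne : floors.Nonempty := Finset.nonempty_iff_ne_empty.mpr fun he => by simp [he] at hsum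
    exact Finset.card_eq_one.mp (by have := hne.card_pos; omega)
  have hinf : ∀ v, G.InfVert v ↔ v ≠ v₀ := fun v => by
    simpa [floors, not_not] using (Finset.ext_iff.mp hv₀ v).not
  have hdiv : G.div v₀ = 2 := by simpa [hv₀] using hsum
  have hsink : G.IsSink v₀ := hG.sink_of_two v₀ (by simp [hinf]) hdiv
  have hsrc : ∀ e, G.src e ≠ v₀ := fun e he =>
    hG.acyclic v₀ (.single ⟨e, he, hsink e (Or.inl he)⟩)
  refine ⟨v₀, ⟨fun e => ?_, fun e e' hee' => ?_, fun v => ?_⟩, hdiv⟩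
  · by_contra hne
    exact ((hinf _).mpr hne).tgt_ne e rfl
  · exact ((hinf _).mpr (hsrc e)).existsUnique_src.unique rfl hee'.symm
  · exact ⟨fun ⟨e, he⟩ => he ▸ hsrc e, fun hv => ((hinf v).mpr hv).existsUnique_src.exists⟩

/-- The marking elements that a marking sends to edges, rather than to vertices. -/
def MarkDom.OnEdge {k g a : ℕ} {b : Fin k → ℕ} {l1 l2 : ℕ} (p : MarkDom k g a b l1 l2) : Prop :=
  Sum.elim (fun i : Fin (a + g + l1 + l2 - 1) => l1 ≤ (i : ℕ))
    (fun _ : Σ i : Fin k, Fin (b i) => False) p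

namespace WOGraph

noncomputable def legMark (G : WOGraph) (P : Prop) (e : Fin G.nE) : Fin G.nV ⊕ Fin G.nE :=
  if P then .inr e else .inl (G.src e)

noncomputable def legMarking (G : WOGraph) {k g a : ℕ} {b : Fin k → ℕ} {l1 l2 : ℕ}
    (φ : MarkDom k g a b l1 l2 → Fin G.nE) (p : MarkDom k g a b l1 l2) :
    Fin G.nV ⊕ Fin G.nE :=
  G.legMark p.OnEdge (φ p)

variable {G : WOGraph} {P : Prop} {e : Fin G.nE}

@[simp] theorem legMark_eq_inr_iff {e' : Fin G.nE} : G.legMark P e = .inr e' ↔ P ∧ e = e' := by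
  by_cases hP : P <;> simp [legMark, hP]

@[simp] theorem legMark_eq_inl_iff {v : Fin G.nV} :
    G.legMark P e = .inl v ↔ ¬ P ∧ G.src e = v := by
  by_cases hP : P <;> simp [legMark, hP]

theorem map_legMark {H : WOGraph} (φV : Fin G.nV → Fin H.nV) (φE : Fin G.nE → Fin H.nE)
    (hsrc : ∀ e, H.src (φE e) = φV (G.src e)) :
    Sum.map φV φE (G.legMark P e) = H.legMark P (φE e) := by
  by_cases hP : P <;> simp [legMark, hP, hsrc]

section legMarking

variable {k g a : ℕ} {b : Fin k → ℕ} {l1 l2 : ℕ} (φ : MarkDom k g a b l1 l2 ≃ Fin G.nE)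

theorem exists_legMarking_eq_inr_iff :
    (∃ p, G.legMarking φ p = .inr e) ↔ (φ.symm e).OnEdge := by
  refine ⟨fun ⟨p, hp⟩ => ?_, fun hn => ⟨φ.symm e, by simp [legMarking, hn]⟩⟩
  obtain ⟨hp, rfl⟩ := legMark_eq_inr_iff.mp hp
  rwa [Equiv.symm_apply_apply]

theorem exists_legMarking_eq_inl_iff (hsrc : Function.Injective G.src) :
    (∃ p, G.legMarking φ p = .inl (G.src e)) ↔ ¬ (φ.symm e).OnEdge := by
  refine ⟨fun ⟨p, hp⟩ => ?_, fun hn => ⟨φ.symm e, by simp [legMarking, hn]⟩⟩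
  obtain ⟨hp, hpe⟩ := legMark_eq_inl_iff.mp hp
  rwa [← hsrc hpe, Equiv.symm_apply_apply]

end legMarking

end WOGraph

namespace MarkedFD

variable {k g a : ℕ} {b : Fin k → ℕ} {μ₁ μ₂ : List ℕ}

theorem exists_m_eq_legMark (X : MarkedFD k g a b μ₁ μ₂) {v₀ : Fin X.G.nV}
    (hX : X.G.IsStar v₀) (hdiv : X.G.div v₀ = 2) (p : MarkDom k g a b μ₁.length μ₂.length) :
    ∃ e, X.m p = X.G.legMark p.OnEdge e := by
  have hleaf : ∀ v, X.G.InfVert v → X.m p = .inl v → ¬ p.OnEdge →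
      ∃ e, X.m p = X.G.legMark p.OnEdge e := fun v hv hm hp => by
    obtain ⟨e, rfl⟩ := (hX.exists_src_iff v).mpr ((hX.infVert_iff v).mp hv)
    exact ⟨e, by simp [WOGraph.legMark, hm, hp]⟩
  rcases p with i | ⟨i, q⟩
  · by_cases hi : (i : ℕ) < μ₁.length
    · obtain ⟨v, hv, hm⟩ := (X.marking.mu1_vert i).mpr hi
      exact hleaf v hv hm (by simpa [MarkDom.OnEdge] using hi)
    rcases hm : X.m (.inl i) with v | e
    · by_cases hv : v = v₀
      · exact absurd (hm.trans (by rw [hv])) (X.marking.no_floor_one v₀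
          (by simp [hX.infVert_iff]) hdiv (.inl i))
      · exact absurd ((X.marking.mu1_vert i).mp ⟨v, (hX.infVert_iff v).mpr hv, hm⟩) hi
    · exact ⟨e, by simp [WOGraph.legMark, MarkDom.OnEdge, not_lt.mp hi]⟩
  · obtain ⟨v, hv, hm⟩ := X.marking.exc_vert i q
    exact hleaf v hv hm (by simp [MarkDom.OnEdge])

theorem exists_equiv_m_eq_legMarking (X : MarkedFD k g a b μ₁ μ₂) {v₀ : Fin X.G.nV}
    (hX : X.G.IsStar v₀) (hdiv : X.G.div v₀ = 2) :
    ∃ ε : MarkDom k g a b μ₁.length μ₂.length ≃ Fin X.G.nE,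
      X.m = X.G.legMarking ε := by
  choose ε hε using X.exists_m_eq_legMark hX hdiv
  have hpair : ∀ e, Xor (∃ p, X.m p = .inl (X.G.src e)) (∃ p, X.m p = .inr e) := fun e =>
    X.marking.inf_pair _ ((hX.infVert_iff _).mpr (hX.src_ne e)) e (Or.inl rfl)
  have hexcl : ∀ e, (∃ p, X.m p = .inl (X.G.src e)) → (∃ p, X.m p = .inr e) → False :=
    fun e hl hr => (xor_def.mp (hpair e)).elim (fun h => h.2 hr) (fun h => h.2 hl)
  refine ⟨Equiv.ofBijective ε ⟨fun p q hpq => ?_, fun e => ?_⟩, funext hε⟩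
  · by_cases hp : p.OnEdge <;> by_cases hq : q.OnEdge
    · exact X.marking.inj (by rw [hε p, hε q, hpq]; simp [WOGraph.legMark, hp, hq])
    · exact (hexcl (ε q) ⟨q, by simp [hε q, hq]⟩ ⟨p, by simp [hε p, hp, hpq]⟩).elim
    · exact (hexcl (ε p) ⟨p, by simp [hε p, hp]⟩ ⟨q, by simp [hε q, hq, hpq]⟩).elim
    · exact X.marking.inj (by rw [hε p, hε q, hpq]; simp [WOGraph.legMark, hp, hq])
  · rcases Xor.or (hpair e) with ⟨p, hp⟩ | ⟨p, hp⟩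
    · rw [hε p, WOGraph.legMark_eq_inl_iff] at hp
      exact ⟨p, hX.src_injective hp.2⟩
    · rw [hε p, WOGraph.legMark_eq_inr_iff] at hp
      exact ⟨p, hp.2⟩

theorem equivalent_of_degree_one (X Y : MarkedFD k g 1 b μ₁ μ₂) : X.Equivalent Y := by
  obtain ⟨u₀, hX, hdivX⟩ := X.fd.exists_isStar
  obtain ⟨v₀, hY, hdivY⟩ := Y.fd.exists_isStar
  obtain ⟨εX, hεX⟩ := X.exists_equiv_m_eq_legMarking hX hdivX
  obtain ⟨εY, hεY⟩ := Y.exists_equiv_m_eq_legMarking hY hdivY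
  let φE := εX.symm.trans εY
  let φV := hX.vertexEquiv.symm.trans (φE.optionCongr.trans hY.vertexEquiv)
  have hsrc : ∀ e, Y.G.src (φE e) = φV (X.G.src e) := fun e => by
    simp only [φV, Equiv.trans_apply, hX.vertexEquiv_symm_src, Equiv.optionCongr_apply,
      Option.map_some, hY.vertexEquiv_some]
  -- both stars have as many legs as marking elements, and all their legs share the weight
  have hw : ∀ e, Y.G.w (φE e) = X.G.w e := fun e => by
    have hnE : X.G.nE = Y.G.nE := Fin.equiv_iff_eq.mp ⟨φE⟩
    refine Nat.eq_of_mul_eq_mul_right (Fin.pos e) ?_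
    rw [hX.w_mul_nE hdivX e, congrArg (Y.G.w (φE e) * ·) hnE, hY.w_mul_nE hdivY]
  refine ⟨φV, φE, Equiv.refl _, hsrc, fun e => ?_, hw, fun _ => rfl, fun _ p => ⟨p, rfl⟩,
    fun p => ?_⟩
  · simp only [φV, Equiv.trans_apply, hX.tgt_eq, hY.tgt_eq, hX.vertexEquiv_symm_center,
      Equiv.optionCongr_apply, Option.map_none, hY.vertexEquiv_none]
  · rw [Equiv.refl_apply, hεX, hεY, WOGraph.legMarking, WOGraph.legMarking,
      WOGraph.map_legMark φV φE hsrc]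
    simp only [φE, Equiv.trans_apply, Equiv.symm_apply_apply]

end MarkedFD

namespace WOGraph.IsStar

variable {G : WOGraph} {v₀ : Fin G.nV} {k : ℕ} {b : Fin k → ℕ} {μ₁ μ₂ : List ℕ}

theorem filter_legMarking_eq_inr (h : G.IsStar v₀)
    (φ : MarkDom k 0 1 b μ₁.length μ₂.length ≃ Fin G.nE) :
    (Finset.univ.filter fun e => G.InfEdge e ∧
        ∃ i : Fin (1 + 0 + μ₁.length + μ₂.length - 1), G.legMarking φ (Sum.inl i) = .inr e) =
      (Finset.univ.filter fun i : Fin (1 + 0 + μ₁.length + μ₂.length - 1) =>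
        μ₁.length ≤ (i : ℕ)).image fun i => φ (Sum.inl i) := by
  ext e
  simp [h.infEdge, legMarking, MarkDom.OnEdge]

theorem card_filter_legMarking_eq_inr (h : G.IsStar v₀)
    (φ : MarkDom k 0 1 b μ₁.length μ₂.length ≃ Fin G.nE) :
    (Finset.univ.filter fun e => G.InfEdge e ∧
        ∃ i : Fin (1 + 0 + μ₁.length + μ₂.length - 1),
          G.legMarking φ (Sum.inl i) = .inr e).card = μ₂.length := by
  rw [h.filter_legMarking_eq_inr φ, Finset.card_image_of_injective _
    fun i j hij => Sum.inl_injective (φ.injective hij), Fin.card_filter_le_val]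
  omega

theorem not_transGen_legMarking {g a l1 l2 : ℕ} (h : G.IsStar v₀)
    (φ : MarkDom k g a b l1 l2 ≃ Fin G.nE) (p q : MarkDom k g a b l1 l2) :
    ¬ Relation.TransGen G.veStep (G.legMarking φ p) (G.legMarking φ q) := by
  intro hpq
  rcases h.transGen_veStep hpq with hq | ⟨e, hp, hq⟩
  · exact h.src_ne _ (legMark_eq_inl_iff.mp hq).2
  · obtain ⟨hp, hpe⟩ := legMark_eq_inl_iff.mp hp
    obtain ⟨hq, hqe⟩ := legMark_eq_inr_iff.mp hq
    exact hp (by rwa [φ.injective ((h.src_injective hpe).trans hqe.symm)])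

theorem isMarking_legMarking (h : G.IsStar v₀)
    (φ : MarkDom k 0 1 b μ₁.length μ₂.length ≃ Fin G.nE) {c : ℕ} (hw : ∀ e, G.w e = c)
    (hb : ∀ i, b i ≤ 1) (hμ₁ : ∀ x ∈ μ₁, x = c) (hμ₂ : ∀ x ∈ μ₂, x = c) :
    IsMarking k 0 1 b μ₁ μ₂ G (G.legMarking φ) := by
  have hinl : ∀ {p v}, G.legMarking φ p = .inl v ↔ ¬ p.OnEdge ∧ G.src (φ p) = v :=
    legMark_eq_inl_iff
  have hinr : ∀ {p e}, G.legMarking φ p = .inr e ↔ p.OnEdge ∧ φ p = e := legMark_eq_inr_iff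
  have hsrc_inj : ∀ {p q}, G.src (φ p) = G.src (φ q) ↔ p = q :=
    h.src_injective.eq_iff.trans φ.injective.eq_iff
  refine ⟨fun p q hpq => ?_, fun i j hij => ?_, fun v hv _ p hp => ?_, fun v hv e he => ?_,
    fun i p => ?_, fun i => ?_, ?_, fun i _ v e hv he => ?_, ?_⟩
  · by_cases hq : q.OnEdge
    · exact φ.injective (hinr.mp (hpq.trans (hinr.mpr ⟨hq, rfl⟩))).2
    · exact hsrc_inj.mp (hinl.mp (hpq.trans (hinl.mpr ⟨hq, rfl⟩))).2
  · exact absurd hij (h.not_transGen_legMarking φ _ _)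
  · exact h.src_ne _ ((hinl.mp hp).2.trans (by simpa [h.infVert_iff] using hv))
  · obtain ⟨e', rfl⟩ := (h.exists_src_iff v).mpr ((h.infVert_iff v).mp hv)
    obtain rfl := h.adj_src_iff.mp he
    rw [exists_legMarking_eq_inl_iff φ h.src_injective, exists_legMarking_eq_inr_iff φ]
    exact xor_not_left.mpr Iff.rfl
  · exact ⟨_, (h.infVert_iff _).mpr (h.src_ne _), hinl.mpr ⟨by simp [MarkDom.OnEdge], rfl⟩⟩
  · refine ⟨fun ⟨v, _, hv⟩ => by simpa [MarkDom.OnEdge] using (hinl.mp hv).1, fun hi => ?_⟩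
    exact ⟨_, (h.infVert_iff _).mpr (h.src_ne _),
      hinl.mpr ⟨by simpa [MarkDom.OnEdge] using hi, rfl⟩⟩
  · rintro i v - e e' - - ⟨p, u, hpu, he⟩ ⟨p', u', hpu', he'⟩
    obtain rfl := (hinl.mp hpu).2
    obtain rfl := (hinl.mp hpu').2
    have : Subsingleton (Fin (b i)) := Fin.subsingleton_iff_le_one.mpr (hb i)
    rw [h.adj_src_iff.mp he, h.adj_src_iff.mp he', Subsingleton.elim p p']
  · rw [hw, hμ₁ _ (List.get_mem _ _)]
  · rw [Multiset.map_congr rfl fun e _ => hw e,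
      Multiset.map_const', Finset.card_val, h.card_filter_legMarking_eq_inr φ,
      ← Multiset.coe_replicate, ← List.eq_replicate_iff.mpr ⟨rfl, hμ₂⟩]

end WOGraph.IsStar

def MarkDom.equivFin {k g a : ℕ} {b : Fin k → ℕ} {l1 l2 : ℕ} :
    MarkDom k g a b l1 l2 ≃ Fin (a + g + l1 + l2 - 1 + ∑ i, b i) :=
  (Equiv.sumCongr (Equiv.refl _) finSigmaFinEquiv).trans finSumFinEquiv

namespace MarkedFD

variable {k : ℕ} {b : Fin k → ℕ} {μ₁ μ₂ : List ℕ}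

theorem edgeMu1_eq_image (X : MarkedFD k 0 1 b μ₁ μ₂) {v₀ : Fin X.G.nV} (hX : X.G.IsStar v₀)
    {φ : MarkDom k 0 1 b μ₁.length μ₂.length ≃ Fin X.G.nE} (hm : X.m = X.G.legMarking φ) :
    X.EdgeMu1 = (Finset.univ.filter fun i : Fin (1 + 0 + μ₁.length + μ₂.length - 1) =>
      (i : ℕ) < μ₁.length).image fun i => φ (Sum.inl i) := by
  ext e
  simp only [EdgeMu1, hm, Finset.mem_filter, Finset.mem_univ, true_and, Finset.mem_image,
    WOGraph.legMarking, WOGraph.legMark_eq_inl_iff, MarkDom.OnEdge, Sum.elim_inl, not_le]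
  constructor
  · rintro ⟨i, hi, _, ⟨-, rfl⟩, he⟩
    exact ⟨i, hi, (hX.adj_src_iff.mp he).symm⟩
  · rintro ⟨i, hi, rfl⟩
    exact ⟨i, hi, _, ⟨hi, rfl⟩, Or.inl rfl⟩

theorem multq_eq_of_isStar (X : MarkedFD k 0 1 b μ₁ μ₂) {v₀ : Fin X.G.nV} (hX : X.G.IsStar v₀)
    {φ : MarkDom k 0 1 b μ₁.length μ₂.length ≃ Fin X.G.nE} (hm : X.m = X.G.legMarking φ)
    {c : ℕ} (hw : ∀ e, X.G.w e = c) (hc : c ≠ 0) :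
    X.multq = (C (c : ℚ)⁻¹ * qInt c) ^ μ₁.length * qInt c ^ μ₂.length := by
  have hμ₁ : X.EdgeMu1.card = μ₁.length := by
    rw [X.edgeMu1_eq_image hX hm, Finset.card_image_of_injective _
      fun i j hij => Sum.inl_injective (φ.injective hij), Fin.card_filter_val_lt]
    omega
  have hμ₂ : X.EdgeMu2.card = μ₂.length := by
    rw [← hX.card_filter_legMarking_eq_inr φ, ← hm]
    rfl
  have hO : X.EdgeO = ∅ := Finset.filter_eq_empty_iff.mpr fun e _ => not_not.mpr (hX.infEdge e)
  have hinv : C (c : ℚ)⁻¹ * C (c : ℚ) = 1 := by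
    rw [← map_mul, inv_mul_cancel₀ (by exact_mod_cast hc), map_one]
  simp only [multq, hw, hO, Finset.prod_const, Finset.card_empty, pow_zero, hμ₁, hμ₂]
  rw [mul_one, mul_right_comm, ← mul_pow, mul_right_comm (C _), hinv, one_mul, mul_comm]

theorem isRefinedCount_of_forall_equivalent {g a : ℕ} (X₀ : MarkedFD k g a b μ₁ μ₂)
    (h : ∀ X : MarkedFD k g a b μ₁ μ₂, X.Equivalent X₀) :
    IsRefinedCount k g a b μ₁ μ₂ X₀.multq :=
  ⟨PUnit, inferInstance, fun _ => X₀, fun X => ⟨⟨⟩, h X, fun _ _ => rfl⟩, by simp⟩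

end MarkedFD

theorem isRefinedCount_degree_one {k : ℕ} {b : Fin k → ℕ} {μ₁ μ₂ : List ℕ} {c : ℕ}
    (hb : ∀ i, b i ≤ 1) (hcard : (μ₁.length + μ₂.length + ∑ i, b i) * c = 2)
    (hμ₁ : ∀ x ∈ μ₁, x = c) (hμ₂ : ∀ x ∈ μ₂, x = c) :
    IsRefinedCount k 0 1 b μ₁ μ₂ ((C (c : ℚ)⁻¹ * qInt c) ^ μ₁.length * qInt c ^ μ₂.length) := by
  have hc : 0 < c := Nat.pos_of_ne_zero fun hc => by simp [hc] at hcard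
  let G := WOGraph.star (fun _ : Fin (1 + 0 + μ₁.length + μ₂.length - 1 + ∑ i, b i) => c)
    fun _ => hc
  have hG : G.IsStar (Fin.last _) := WOGraph.isStar_star _ _
  have hsum : ∑ e, (G.w e : ℤ) = 2 * (1 : ℕ) := by
    change ∑ _e : Fin (1 + 0 + μ₁.length + μ₂.length - 1 + ∑ i, b i), (c : ℤ) = 2 * (1 : ℕ)
    rw [Finset.sum_const, Finset.card_univ, Fintype.card_fin, nsmul_eq_mul,
      show 1 + 0 + μ₁.length + μ₂.length - 1 = μ₁.length + μ₂.length by omega]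
    exact_mod_cast hcard
  let X₀ : MarkedFD k 0 1 b μ₁ μ₂ :=
    ⟨G, G.legMarking MarkDom.equivFin, hG.isFloorDiagram hsum (Or.inl rfl),
      hG.isMarking_legMarking _ (fun _ => rfl) hb hμ₁ hμ₂⟩
  rw [← X₀.multq_eq_of_isStar hG rfl (fun _ => rfl) hc.ne']
  exact MarkedFD.isRefinedCount_of_forall_equivalent X₀ fun X => X.equivalent_of_degree_one X₀

/-- For every `k ≥ 0` (with `i ∈ {1,…,k}` when `k ≥ 1`), the genus-0
refined floor diagram counts for degree-one classes in `X_k'` are: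
`N_q^{(2),∅}(X_k',[L],0) = [2]_q/2`, `N_q^{(1,1),∅}(X_k',[L],0) = 1`,
`N_q^{(1),(1)}(X_k',[L],0) = 1`, `N_q^{∅,(1,1)}(X_k',[L],0) = 1`,
`N_q^{∅,(2)}(X_k',[L],0) = [2]_q`, `N_q^{(1),∅}(X_k',[L]−[E_i],0) = 1`,
`N_q^{∅,(1)}(X_k',[L]−[E_i],0) = 1`.
(Here `[L]` corresponds to `a = 1`, all `bⱼ = 0`, and `[L]−[E_i]` to `a = 1`, `b_i = 1`,
`bⱼ = 0` for `j ≠ i`.) -/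
theorem refined_counts_degree_one (k : ℕ) :
    IsRefinedCount k 0 1 (fun _ => 0) [2] [] (C (2⁻¹ : ℚ) * qInt 2) ∧
    IsRefinedCount k 0 1 (fun _ => 0) [1, 1] [] 1 ∧
    IsRefinedCount k 0 1 (fun _ => 0) [1] [1] 1 ∧
    IsRefinedCount k 0 1 (fun _ => 0) [] [1, 1] 1 ∧
    IsRefinedCount k 0 1 (fun _ => 0) [] [2] (qInt 2) ∧
    ∀ i : Fin k,
      IsRefinedCount k 0 1 (fun j => if j = i then 1 else 0) [1] [] 1 ∧
      IsRefinedCount k 0 1 (fun j => if j = i then 1 else 0) [] [1] 1 := by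
  have qInt_one : qInt 1 = 1 := by simp [qInt]
  refine ⟨?_, ?_, ?_, ?_, ?_, fun i => ⟨?_, ?_⟩⟩
  · simpa using isRefinedCount_degree_one (k := k) (b := fun _ => 0) (μ₁ := [2]) (μ₂ := [])
      (c := 2) (by simp) (by simp) (by simp) (by simp)
  · simpa [qInt_one] using isRefinedCount_degree_one (k := k) (b := fun _ => 0) (μ₁ := [1, 1])
      (μ₂ := []) (c := 1) (by simp) (by simp) (by simp) (by simp)
  · simpa [qInt_one] using isRefinedCount_degree_one (k := k) (b := fun _ => 0) (μ₁ := [1])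
      (μ₂ := [1]) (c := 1) (by simp) (by simp) (by simp) (by simp)
  · simpa [qInt_one] using isRefinedCount_degree_one (k := k) (b := fun _ => 0) (μ₁ := [])
      (μ₂ := [1, 1]) (c := 1) (by simp) (by simp) (by simp) (by simp)
  · simpa using isRefinedCount_degree_one (k := k) (b := fun _ => 0) (μ₁ := []) (μ₂ := [2])
      (c := 2) (by simp) (by simp) (by simp) (by simp)
  · simpa [qInt_one] using isRefinedCount_degree_one (k := k) (b := fun j => if j = i then 1 else 0)
      (μ₁ := [1]) (μ₂ := []) (c := 1) (fun j => by split_ifs <;> simp) (by simp) (by simp) (by simp)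
  · simpa [qInt_one] using isRefinedCount_degree_one (k := k) (b := fun j => if j = i then 1 else 0)
      (μ₁ := []) (μ₂ := [1]) (c := 1) (fun j => by split_ifs <;> simp) (by simp) (by simp) (by simp)
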